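/- arXiv:2202.11633 — 5 statements merged into one kernel-verified Lean document; each statement's English description precedes it below -/
import Mathlib

section
/- The normalized weighted geometric mean minimizes the weighted sum of reverse Kullback–Leibler divergences: for positive probability density functions q_1,…,q_K on Θ and weights w_1,…,w_K ≥ 0 summing to 1 such that ∫_Θ ∏_k q_k(θ)^{w_k} dθ is finite and positive, the density q(θ) = c ∏_k q_k(θ)^{w_k}, with c the normalizing constant, satisfies Σ_k w_k D_KL(q ‖ q_k) ≤ Σ_k w_k D_KL(φ ‖ q_k) for every probability density φ on Θ. -/
/-!
Since `log (c * ∏ₖ qₖ ^ wₖ) = log c + ∑ₖ wₖ log qₖ` and `∑ₖ wₖ = 1`, pointwise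
`∑ₖ wₖ x log (x / qₖ) = x log (x / q) + x log c` for the pooled density `q`. Integrating against a
density `φ` gives `∑ₖ wₖ KL(φ ‖ qₖ) = KL(φ ‖ q) + log c`, in particular `∑ₖ wₖ KL(q ‖ qₖ) = log c`,
and Gibbs' inequality `KL(φ ‖ q) ≥ 0` finishes the proof.
-/

open MeasureTheory Finset

namespace Real

lemma mul_log_div_eq_sub {y : ℝ} (hy : y ≠ 0) (x : ℝ) :
    x * log (x / y) = x * log x - x * log y := by
  rcases eq_or_ne x 0 with rfl | hx
  · simp
  · rw [log_div hx hy, mul_sub]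

lemma sub_le_mul_log_div {x y : ℝ} (hx : 0 ≤ x) (hy : 0 < y) : x - y ≤ x * log (x / y) := by
  rcases hx.eq_or_lt with rfl | hx
  · simpa using hy.le
  · have hlog := one_sub_inv_le_log_of_pos (div_pos hx hy)
    rw [inv_div] at hlog
    calc x - y = x * (1 - y / x) := by field_simp
      _ ≤ x * log (x / y) := mul_le_mul_of_nonneg_left hlog hx.le

lemma log_prod_rpow {ι : Type*} (s : Finset ι) {y : ι → ℝ} (hy : ∀ i ∈ s, 0 < y i) (w : ι → ℝ) :
    log (∏ i ∈ s, y i ^ w i) = ∑ i ∈ s, w i * log (y i) := by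
  rw [log_prod fun i hi => (rpow_pos_of_pos (hy i hi) _).ne']
  exact sum_congr rfl fun i hi => log_rpow (hy i hi) _

lemma sum_mul_mul_log_div_eq {ι : Type*} (s : Finset ι) {w y : ι → ℝ} (hw : ∑ i ∈ s, w i = 1)
    (hy : ∀ i ∈ s, 0 < y i) {c : ℝ} (hc : 0 < c) (x : ℝ) :
    ∑ i ∈ s, w i * (x * log (x / y i)) =
      x * log (x / (c * ∏ i ∈ s, y i ^ w i)) + log c * x := by
  have hG : 0 < ∏ i ∈ s, y i ^ w i := prod_pos fun i hi => rpow_pos_of_pos (hy i hi) _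
  rw [mul_log_div_eq_sub (mul_pos hc hG).ne', log_mul hc.ne' hG.ne', log_prod_rpow s hy,
    sum_congr rfl fun i hi => by rw [mul_log_div_eq_sub (hy i hi).ne']]
  have hsplit : ∑ i ∈ s, w i * (x * log x - x * log (y i)) =
      (∑ i ∈ s, w i) * (x * log x) - x * ∑ i ∈ s, w i * log (y i) := by
    rw [sum_mul, mul_sum, ← sum_sub_distrib]
    exact sum_congr rfl fun i _ => by ring
  rw [hsplit, hw]
  ring

end Real

namespace MeasureTheory

variable {α : Type*} [MeasurableSpace α] {μ : Measure α}

lemma Integrable.of_integrable_sum_of_le {ι : Type*} {s : Finset ι} {f g : ι → α → ℝ}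
    (hf : ∀ i ∈ s, AEStronglyMeasurable (f i) μ) (hg : ∀ i ∈ s, Integrable (g i) μ)
    (hgf : ∀ i ∈ s, g i ≤ᵐ[μ] f i) (hsum : Integrable (fun a => ∑ i ∈ s, f i a) μ)
    {i : ι} (hi : i ∈ s) : Integrable (f i) μ := by
  have hgap : Integrable (fun a => ∑ j ∈ s, (f j a - g j a)) μ := by
    simp only [sum_sub_distrib]
    exact hsum.sub (integrable_finsetSum s hg)
  have hfg : Integrable (f i - g i) μ := by
    refine hgap.mono' ((hf i hi).sub (hg i hi).aestronglyMeasurable) ?_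
    filter_upwards [(Filter.eventually_all_finset s).2 hgf] with a ha
    rw [Pi.sub_apply, Real.norm_of_nonneg (sub_nonneg.2 (ha i hi))]
    exact single_le_sum (f := fun j => f j a - g j a) (fun j hj => sub_nonneg.2 (ha j hj)) hi
  simpa using hfg.add (hg i hi)

lemma integral_mul_log_div_nonneg {f g : α → ℝ} (hf : 0 ≤ᵐ[μ] f) (hg : ∀ᵐ a ∂μ, 0 < g a)
    (hfi : Integrable f μ) (hgi : Integrable g μ) (hfg : ∫ a, g a ∂μ ≤ ∫ a, f a ∂μ) :
    0 ≤ ∫ a, f a * Real.log (f a / g a) ∂μ := by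
  by_cases hint : Integrable (fun a => f a * Real.log (f a / g a)) μ
  · have hmono : ∫ a, (f a - g a) ∂μ ≤ ∫ a, f a * Real.log (f a / g a) ∂μ := by
      refine integral_mono_ae (hfi.sub hgi) hint ?_
      filter_upwards [hf, hg] with a hfa hga using Real.sub_le_mul_log_div hfa hga
    rw [integral_sub hfi hgi] at hmono
    linarith
  · rw [integral_undef hint]

lemma sum_mul_integral_mul_log_div_eq {ι : Type*} [Fintype ι] {q : ι → α → ℝ} {w : ι → ℝ}
    (hw : ∑ i, w i = 1) (hq : ∀ᵐ a ∂μ, ∀ i, 0 < q i a) {c : ℝ} (hc : 0 < c) {x : α → ℝ}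
    (hx : ∫ a, x a ∂μ = 1)
    (hint : ∀ i, Integrable (fun a => w i * (x a * Real.log (x a / q i a))) μ) :
    ∑ i, w i * ∫ a, x a * Real.log (x a / q i a) ∂μ =
      (∫ a, x a * Real.log (x a / (c * ∏ i, q i a ^ w i)) ∂μ) + Real.log c := by
  have hxi : Integrable x μ := .of_integral_ne_zero (by simp [hx])
  have hpt : (fun a => ∑ i, w i * (x a * Real.log (x a / q i a))) =ᵐ[μ]
      fun a => x a * Real.log (x a / (c * ∏ i, q i a ^ w i)) + Real.log c * x a := by
    filter_upwards [hq] with a ha using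
      Real.sum_mul_mul_log_div_eq univ hw (fun i _ => ha i) hc (x a)
  have hsum := integrable_finsetSum univ fun i _ => hint i
  have hrest : Integrable (fun a => x a * Real.log (x a / (c * ∏ i, q i a ^ w i))) μ := by
    refine ((hsum.congr hpt).sub (hxi.const_mul (Real.log c))).congr (.of_forall fun a => ?_)
    simp
  calc ∑ i, w i * ∫ a, x a * Real.log (x a / q i a) ∂μ
      = ∫ a, ∑ i, w i * (x a * Real.log (x a / q i a)) ∂μ := by
        rw [integral_finsetSum univ fun i _ => hint i]
        simp only [integral_const_mul]
    _ = _ := by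
        rw [integral_congr_ae hpt, integral_add hrest (hxi.const_mul _), integral_const_mul, hx,
          mul_one]

/-- Each term is bounded below by the integrable `w i * (p - q i)`, and their sum is `log c * p`. -/
lemma integrable_mul_mul_log_div_of_pool {ι : Type*} [Fintype ι] {q : ι → α → ℝ} {w : ι → ℝ}
    (hw : ∑ i, w i = 1) (hw0 : ∀ i, 0 ≤ w i) (hq : ∀ᵐ a ∂μ, ∀ i, 0 < q i a)
    (hqi : ∀ i, Integrable (q i) μ) {c : ℝ} (hc : 0 < c)
    (hp : Integrable (fun a => c * ∏ i, q i a ^ w i) μ) (i : ι) :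
    Integrable (fun a => w i * ((c * ∏ j, q j a ^ w j) *
      Real.log ((c * ∏ j, q j a ^ w j) / q i a))) μ := by
  set p := fun a => c * ∏ i, q i a ^ w i
  have hp_pos : ∀ᵐ a ∂μ, 0 < p a := by
    filter_upwards [hq] with a ha
    exact mul_pos hc (prod_pos fun i _ => Real.rpow_pos_of_pos (ha i) _)
  refine Integrable.of_integrable_sum_of_le (s := univ)
    (f := fun i a => w i * (p a * Real.log (p a / q i a))) (g := fun i a => w i * (p a - q i a))
    (fun i _ => ?_) (fun i _ => (hp.sub (hqi i)).const_mul _) (fun i _ => ?_) ?_ (mem_univ i)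
  · exact ((hp.aemeasurable.mul
      (hp.aemeasurable.div (hqi i).aemeasurable).log).const_mul _).aestronglyMeasurable
  · filter_upwards [hq, hp_pos] with a ha hpa
    exact mul_le_mul_of_nonneg_left (Real.sub_le_mul_log_div hpa.le (ha i)) (hw0 i)
  · refine (hp.const_mul (Real.log c)).congr ?_
    filter_upwards [hq, hp_pos] with a ha hpa
    simp only [Real.sum_mul_mul_log_div_eq univ hw (fun i _ => ha i) hc, div_self hpa.ne',
      Real.log_one, mul_zero, zero_add, p]

end MeasureTheory

theorem loglinear_pool_minimizes_reverse_KL_general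
    {Θ : Type*} [MeasurableSpace Θ] (μ : Measure Θ)
    {K : ℕ} (q : Fin K → Θ → ℝ) (w : Fin K → ℝ)
    (hqpos : ∀ k θ, 0 < q k θ)
    (hqint : ∀ k, ∫ θ, q k θ ∂μ = 1)
    (hwnn : ∀ k, 0 ≤ w k) (hwsum : ∑ k, w k = 1)
    (hZpos : 0 < ∫ θ, ∏ k, q k θ ^ w k ∂μ)
    (φ : Θ → ℝ) (hφnn : ∀ θ, 0 ≤ φ θ)
    (hφint : ∫ θ, φ θ ∂μ = 1)
    (hKLint : ∀ k, Integrable (fun θ => φ θ * Real.log (φ θ / q k θ)) μ) :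
    (let c : ℝ := (∫ θ, ∏ k, q k θ ^ w k ∂μ)⁻¹
     let qa : Θ → ℝ := fun θ => c * ∏ k, q k θ ^ w k
     ∑ k, w k * ∫ θ, qa θ * Real.log (qa θ / q k θ) ∂μ ≤
       ∑ k, w k * ∫ θ, φ θ * Real.log (φ θ / q k θ) ∂μ) := by
  intro c qa
  have hc : 0 < c := inv_pos.mpr hZpos
  have hqa_pos (θ : Θ) : 0 < qa θ :=
    mul_pos hc (prod_pos fun k _ => Real.rpow_pos_of_pos (hqpos k θ) _)
  have hqa_one : ∫ θ, qa θ ∂μ = 1 := by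
    rw [integral_const_mul]
    exact inv_mul_cancel₀ hZpos.ne'
  have hqa_int : Integrable qa μ := .of_integral_ne_zero (by simp [hqa_one])
  have hq_int (k : Fin K) : Integrable (q k) μ := .of_integral_ne_zero (by simp [hqint k])
  have hqa_self (θ : Θ) : qa θ / (c * ∏ k, q k θ ^ w k) = 1 := div_self (hqa_pos θ).ne'
  have hq_pos : ∀ᵐ θ ∂μ, ∀ k, 0 < q k θ := .of_forall fun θ k => hqpos k θ
  have hKLint_qa := integrable_mul_mul_log_div_of_pool hwsum hwnn hq_pos hq_int hc hqa_int
  have hL := sum_mul_integral_mul_log_div_eq hwsum hq_pos hc hqa_one hKLint_qa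
  have hR := sum_mul_integral_mul_log_div_eq hwsum hq_pos hc hφint
    fun k => (hKLint k).const_mul (w k)
  have hGibbs := integral_mul_log_div_nonneg (.of_forall hφnn) (.of_forall hqa_pos)
    (.of_integral_ne_zero (by simp [hφint])) hqa_int (hqa_one.trans hφint.symm).le
  simp only [hqa_self, Real.log_one, mul_zero, integral_zero, zero_add] at hL
  rw [hL, hR]
  linarith

/-- The normalized weighted geometric mean minimizes the weighted sum of
reverse Kullback–Leibler divergences. -/
theorem loglinear_pool_minimizes_reverse_KL
    {Θ : Type*} [MeasurableSpace Θ] (μ : Measure Θ) [SigmaFinite μ]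
    {K : ℕ} (q : Fin K → Θ → ℝ) (w : Fin K → ℝ)
    (hqmeas : ∀ k, Measurable (q k)) (hqpos : ∀ k θ, 0 < q k θ)
    (hqint : ∀ k, ∫ θ, q k θ ∂μ = 1)
    (hwnn : ∀ k, 0 ≤ w k) (hwsum : ∑ k, w k = 1)
    (hZint : Integrable (fun θ => ∏ k, q k θ ^ w k) μ)
    (hZpos : 0 < ∫ θ, ∏ k, q k θ ^ w k ∂μ)
    (φ : Θ → ℝ) (hφmeas : Measurable φ) (hφnn : ∀ θ, 0 ≤ φ θ)
    (hφint : ∫ θ, φ θ ∂μ = 1)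
    (hKLint : ∀ k, Integrable (fun θ => φ θ * Real.log (φ θ / q k θ)) μ) :
    (let c : ℝ := (∫ θ, ∏ k, q k θ ^ w k ∂μ)⁻¹
     let qa : Θ → ℝ := fun θ => c * ∏ k, q k θ ^ w k
     ∑ k, w k * ∫ θ, qa θ * Real.log (qa θ / q k θ) ∂μ ≤
       ∑ k, w k * ∫ θ, φ θ * Real.log (φ θ / q k θ) ∂μ) :=
  loglinear_pool_minimizes_reverse_KL_general μ q w hqpos hqint hwnn hwsum hZpos φ hφnn hφint hKLint
end

section
/- The normalized weighted Hölder mean of order α minimizes the weighted sum of α-divergences: for α ∈ ℝ \ {0,1}, probability densities q_1,…,q_K on Θ, and weights w_1,…,w_K ≥ 0 summing to 1 such that c = (∫_Θ (Σ_k w_k q_k(θ)^α)^{1/α} dθ)^{-1} is well defined, the density q(θ) = c (Σ_k w_k q_k(θ)^α)^{1/α} satisfies Σ_k w_k D_α(q_k ‖ q) ≤ Σ_k w_k D_α(q_k ‖ φ) for every probability density φ. -/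
/-!
Put `S = ∑ₖ wₖ qₖ ^ α`, `g = S ^ (1/α)` and `I = ∫ g`. For every probability density `ψ`,
`∑ₖ wₖ D_α(qₖ ‖ ψ) = (α(α-1))⁻¹ (∫ S ψ ^ (1-α) - 1)`. For the pool `ψ = g / I` the integral is
`I ^ α`; for an arbitrary `φ` it is `∫ g ^ α φ ^ (1-α)`. Hölder's inequality gives
`∫ g ^ α φ ^ (1-α) ≤ I ^ α` for `0 < α < 1`. Applied to
`g = (g ^ α φ ^ (1-α)) ^ (1/α) φ ^ (1-1/α)` it gives the reverse inequality for `α > 1`, and the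
case `α < 0` is the case `1 - α > 1` with `g` and `φ` exchanged. In each case the sign of
`α(α-1)` turns this into the claim.
-/

open MeasureTheory

section

variable {Θ : Type*} [MeasurableSpace Θ] {μ : Measure Θ}

theorem integral_rpow_mul_rpow_le {u v : Θ → ℝ} (hu0 : 0 ≤ᵐ[μ] u) (hv0 : 0 ≤ᵐ[μ] v)
    (hu : Integrable u μ) (hv : Integrable v μ) {t : ℝ} (ht0 : 0 ≤ t) (ht1 : t ≤ 1) :
    ∫ θ, u θ ^ t * v θ ^ (1 - t) ∂μ ≤ (∫ θ, u θ ∂μ) ^ t * (∫ θ, v θ ∂μ) ^ (1 - t) := by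
  have ht1' : 0 ≤ 1 - t := sub_nonneg.mpr ht1
  have hprod0 : 0 ≤ᵐ[μ] fun θ => u θ ^ t * v θ ^ (1 - t) := by
    filter_upwards [hu0, hv0] with θ hu hv
    exact mul_nonneg (Real.rpow_nonneg hu t) (Real.rpow_nonneg hv _)
  have hmeas : AEStronglyMeasurable (fun θ => u θ ^ t * v θ ^ (1 - t)) μ :=
    ((hu.aemeasurable.pow_const t).mul (hv.aemeasurable.pow_const _)).aestronglyMeasurable
  rw [integral_eq_lintegral_of_nonneg_ae hprod0 hmeas, integral_eq_lintegral_of_nonneg_ae hu0 hu.1,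
    integral_eq_lintegral_of_nonneg_ae hv0 hv.1, ENNReal.toReal_rpow, ENNReal.toReal_rpow,
    ← ENNReal.toReal_mul]
  refine ENNReal.toReal_mono (ENNReal.mul_ne_top
    (ENNReal.rpow_ne_top_of_nonneg ht0 hu.lintegral_lt_top.ne)
    (ENNReal.rpow_ne_top_of_nonneg ht1' hv.lintegral_lt_top.ne)) ?_
  calc ∫⁻ θ, ENNReal.ofReal (u θ ^ t * v θ ^ (1 - t)) ∂μ
      = ∫⁻ θ, ENNReal.ofReal (u θ) ^ t * ENNReal.ofReal (v θ) ^ (1 - t) ∂μ := by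
        refine lintegral_congr_ae ?_
        filter_upwards [hu0, hv0] with θ hu hv
        rw [ENNReal.ofReal_rpow_of_nonneg hu ht0, ENNReal.ofReal_rpow_of_nonneg hv ht1',
          ENNReal.ofReal_mul (Real.rpow_nonneg hu t)]
    _ ≤ _ := ENNReal.lintegral_mul_norm_pow_le hu.aemeasurable.ennreal_ofReal
        hv.aemeasurable.ennreal_ofReal ht0 ht1' (by ring)

theorem rpow_integral_mul_rpow_integral_le_of_one_le {g φ : Θ → ℝ} {α : ℝ} (hα : 1 ≤ α)
    (hg : ∀ θ, 0 ≤ g θ) (hφ : ∀ θ, 0 < φ θ) (hφint : Integrable φ μ)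
    (hφpos : 0 < ∫ θ, φ θ ∂μ) (hint : Integrable (fun θ => g θ ^ α * φ θ ^ (1 - α)) μ) :
    (∫ θ, g θ ∂μ) ^ α * (∫ θ, φ θ ∂μ) ^ (1 - α) ≤ ∫ θ, g θ ^ α * φ θ ^ (1 - α) ∂μ := by
  have hα0 : 0 < α := by linarith
  have hexp : (1 - α) * α⁻¹ + (1 - α⁻¹) = 0 := by field_simp; ring
  set B := ∫ θ, g θ ^ α * φ θ ^ (1 - α) ∂μ
  set P := ∫ θ, φ θ ∂μ
  have hB : 0 ≤ B := integral_nonneg fun θ => by have := hφ θ; have := hg θ; positivity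
  have hmean θ : (g θ ^ α * φ θ ^ (1 - α)) ^ α⁻¹ * φ θ ^ (1 - α⁻¹) = g θ := by
    have := hφ θ; have := hg θ
    rw [Real.mul_rpow (by positivity) (by positivity), ← Real.rpow_mul (hg θ),
      ← Real.rpow_mul (hφ θ).le, mul_assoc, ← Real.rpow_add (hφ θ), mul_inv_cancel₀ hα0.ne',
      hexp, Real.rpow_one, Real.rpow_zero, mul_one]
  have hholder := integral_rpow_mul_rpow_le
    (Filter.Eventually.of_forall fun θ => (by have := hφ θ; have := hg θ; positivity :
      0 ≤ g θ ^ α * φ θ ^ (1 - α)))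
    (Filter.Eventually.of_forall fun θ => (hφ θ).le) hint hφint (inv_nonneg.mpr hα0.le)
    (inv_le_one_of_one_le₀ hα)
  simp only [hmean] at hholder
  calc (∫ θ, g θ ∂μ) ^ α * P ^ (1 - α)
      ≤ (B ^ α⁻¹ * P ^ (1 - α⁻¹)) ^ α * P ^ (1 - α) := by
        gcongr
        exact integral_nonneg hg
    _ = B := by
        rw [Real.mul_rpow (by positivity) (by positivity), ← Real.rpow_mul hB,
          ← Real.rpow_mul hφpos.le, mul_assoc, ← Real.rpow_add hφpos, inv_mul_cancel₀ hα0.ne',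
          Real.rpow_one, show (1 - α⁻¹) * α + (1 - α) = 0 by field_simp; ring, Real.rpow_zero,
          mul_one]

theorem rpow_integral_mul_rpow_integral_le {g φ : Θ → ℝ} {α : ℝ} (hα : α ≤ 0 ∨ 1 ≤ α)
    (hg : ∀ θ, 0 < g θ) (hφ : ∀ θ, 0 < φ θ) (hgint : Integrable g μ) (hφint : Integrable φ μ)
    (hgpos : 0 < ∫ θ, g θ ∂μ) (hφpos : 0 < ∫ θ, φ θ ∂μ)
    (hint : Integrable (fun θ => g θ ^ α * φ θ ^ (1 - α)) μ) :
    (∫ θ, g θ ∂μ) ^ α * (∫ θ, φ θ ∂μ) ^ (1 - α) ≤ ∫ θ, g θ ^ α * φ θ ^ (1 - α) ∂μ := by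
  rcases hα with hα | hα
  · have hswapped := rpow_integral_mul_rpow_integral_le_of_one_le (α := 1 - α) (by linarith)
      (fun θ => (hφ θ).le) hg hgint hgpos (by simpa only [sub_sub_cancel, mul_comm] using hint)
    simpa only [sub_sub_cancel, mul_comm] using hswapped
  · exact rpow_integral_mul_rpow_integral_le_of_one_le hα (fun θ => (hg θ).le) hφ hφint hφpos
      hint

theorem inv_mul_rpow_integral_sub_one_le {g φ : Θ → ℝ} {α : ℝ} (hα0 : α ≠ 0) (hα1 : α ≠ 1)
    (hg : ∀ θ, 0 < g θ) (hφ : ∀ θ, 0 < φ θ) (hgint : Integrable g μ) (hφint : Integrable φ μ)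
    (hgpos : 0 < ∫ θ, g θ ∂μ) (hφ1 : ∫ θ, φ θ ∂μ = 1)
    (hint : Integrable (fun θ => g θ ^ α * φ θ ^ (1 - α)) μ) :
    (α * (α - 1))⁻¹ * ((∫ θ, g θ ∂μ) ^ α - 1) ≤
      (α * (α - 1))⁻¹ * (∫ θ, g θ ^ α * φ θ ^ (1 - α) ∂μ - 1) := by
  by_cases hmid : 0 < α ∧ α < 1
  · have hholder := integral_rpow_mul_rpow_le (Filter.Eventually.of_forall fun θ => (hg θ).le)
      (Filter.Eventually.of_forall fun θ => (hφ θ).le) hgint hφint hmid.1.le hmid.2.le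
    rw [hφ1, Real.one_rpow, mul_one] at hholder
    exact mul_le_mul_of_nonpos_left (by linarith) (inv_nonpos.mpr (by nlinarith))
  · have hout : α ≤ 0 ∨ 1 ≤ α := (not_and_or.mp hmid).imp not_lt.mp not_lt.mp
    have hreverse := rpow_integral_mul_rpow_integral_le hout hg hφ hgint hφint hgpos
      (hφ1 ▸ one_pos) hint
    rw [hφ1, Real.one_rpow, mul_one] at hreverse
    have hC : 0 < α * (α - 1) := by
      rcases hout with h | h
      · exact mul_pos_of_neg_of_neg (lt_of_le_of_ne h hα0) (by linarith)
      · exact mul_pos (by linarith) (sub_pos.mpr (lt_of_le_of_ne h (Ne.symm hα1)))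
    exact mul_le_mul_of_nonneg_left (by linarith) (inv_pos.mpr hC).le

noncomputable def alphaDiv (μ : Measure Θ) (α : ℝ) (p ψ : Θ → ℝ) : ℝ :=
  (α * (α - 1))⁻¹ * ∫ θ, ψ θ * ((p θ ^ α - ψ θ ^ α) / ψ θ ^ α) ∂μ

theorem mul_sub_rpow_div_rpow {x : ℝ} (hx : 0 < x) (α y : ℝ) :
    x * ((y - x ^ α) / x ^ α) = y * x ^ (1 - α) - x := by
  rw [Real.rpow_sub hx, Real.rpow_one]
  field_simp

theorem integrable_sum_mul_rpow_mul_rpow {ι : Type*} [Fintype ι] {α : ℝ} {p : ι → Θ → ℝ}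
    (w : ι → ℝ) {ψ : Θ → ℝ} (hψ : ∀ θ, 0 < ψ θ) (hψint : Integrable ψ μ)
    (hdiv : ∀ i, Integrable (fun θ => ψ θ * ((p i θ ^ α - ψ θ ^ α) / ψ θ ^ α)) μ) :
    Integrable (fun θ => (∑ i, w i * p i θ ^ α) * ψ θ ^ (1 - α)) μ := by
  have hterm i : Integrable (fun θ => w i * p i θ ^ α * ψ θ ^ (1 - α)) μ :=
    (((hdiv i).add hψint).const_mul (w i)).congr (Filter.Eventually.of_forall fun θ => by
      simp only [Pi.add_apply, mul_sub_rpow_div_rpow (hψ θ)]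
      ring)
  simpa only [Finset.sum_mul] using integrable_finsetSum Finset.univ fun i _ => hterm i

theorem sum_mul_alphaDiv_eq {ι : Type*} [Fintype ι] {α : ℝ} {p : ι → Θ → ℝ} {w : ι → ℝ}
    {ψ : Θ → ℝ} (hp : ∀ i θ, 0 ≤ p i θ) (hpm : ∀ i, AEMeasurable (p i) μ) (hw : ∀ i, 0 ≤ w i)
    (hwsum : ∑ i, w i = 1) (hψ : ∀ θ, 0 < ψ θ) (hψint : Integrable ψ μ) (hψ1 : ∫ θ, ψ θ ∂μ = 1)
    (hint : Integrable (fun θ => (∑ i, w i * p i θ ^ α) * ψ θ ^ (1 - α)) μ) :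
    ∑ i, w i * alphaDiv μ α (p i) ψ =
      (α * (α - 1))⁻¹ * (∫ θ, (∑ i, w i * p i θ ^ α) * ψ θ ^ (1 - α) ∂μ - 1) := by
  have hterm i : Integrable (fun θ => w i * p i θ ^ α * ψ θ ^ (1 - α)) μ := by
    refine hint.mono' ((((hpm i).pow_const α).const_mul (w i)).mul
      (hψint.aemeasurable.pow_const _)).aestronglyMeasurable
      (Filter.Eventually.of_forall fun θ => ?_)
    have hψα : 0 ≤ ψ θ ^ (1 - α) := Real.rpow_nonneg (hψ θ).le _
    have hsummand j : 0 ≤ w j * p j θ ^ α := mul_nonneg (hw j) (Real.rpow_nonneg (hp j θ) _)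
    rw [Real.norm_of_nonneg (mul_nonneg (hsummand i) hψα)]
    exact mul_le_mul_of_nonneg_right
      (Finset.single_le_sum (fun j _ => hsummand j) (Finset.mem_univ i)) hψα
  calc ∑ i, w i * alphaDiv μ α (p i) ψ
      = (α * (α - 1))⁻¹ * ∑ i, ∫ θ, (w i * p i θ ^ α * ψ θ ^ (1 - α) - w i * ψ θ) ∂μ := by
        simp only [alphaDiv, mul_sub_rpow_div_rpow (hψ _), Finset.mul_sum]
        refine Finset.sum_congr rfl fun i _ => ?_
        rw [mul_left_comm, ← integral_const_mul]
        simp only [mul_sub, mul_assoc]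
    _ = (α * (α - 1))⁻¹ * ∫ θ, ((∑ i, w i * p i θ ^ α) * ψ θ ^ (1 - α) - ψ θ) ∂μ := by
        rw [← integral_finsetSum]
        · simp only [Finset.sum_sub_distrib, ← Finset.sum_mul, hwsum, one_mul]
        · exact fun i _ => (hterm i).sub (hψint.const_mul (w i))
    _ = (α * (α - 1))⁻¹ * (∫ θ, (∑ i, w i * p i θ ^ α) * ψ θ ^ (1 - α) ∂μ - 1) := by
        rw [integral_sub hint hψint, hψ1]

theorem sum_mul_pos_of_sum_eq_one {ι : Type*} [Fintype ι] {w x : ι → ℝ} (hw : ∀ i, 0 ≤ w i)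
    (hwsum : ∑ i, w i = 1) (hx : ∀ i, 0 < x i) : 0 < ∑ i, w i * x i := by
  obtain ⟨i, -, hi⟩ := Finset.exists_lt_of_sum_lt (f := 0) (g := w) (s := Finset.univ)
    (by simp [hwsum])
  exact Finset.sum_pos' (fun j _ => mul_nonneg (hw j) (hx j).le)
    ⟨i, Finset.mem_univ i, mul_pos hi (hx i)⟩

theorem mul_mul_rpow_one_div_rpow {s c : ℝ} (hs : 0 < s) (hc : 0 ≤ c) {α : ℝ} (hα : α ≠ 0) :
    s * (c * s ^ (1 / α)) ^ (1 - α) = c ^ (1 - α) * s ^ (1 / α) := by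
  calc s * (c * s ^ (1 / α)) ^ (1 - α)
      = c ^ (1 - α) * (s ^ (1 : ℝ) * s ^ (1 / α * (1 - α))) := by
        rw [Real.mul_rpow hc (Real.rpow_nonneg hs.le _), ← Real.rpow_mul hs.le, Real.rpow_one]
        ring
    _ = c ^ (1 - α) * s ^ (1 / α) := by
        rw [← Real.rpow_add hs]
        congr 2
        field_simp
        ring

noncomputable def holderPool {ι : Type*} [Fintype ι] (μ : Measure Θ) (α : ℝ) (w : ι → ℝ)
    (p : ι → Θ → ℝ) (θ : Θ) : ℝ :=
  (∫ θ', (∑ i, w i * p i θ' ^ α) ^ (1 / α) ∂μ)⁻¹ * (∑ i, w i * p i θ ^ α) ^ (1 / α)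

theorem sum_mul_alphaDiv_holderPool {ι : Type*} [Fintype ι] {α : ℝ} (hα : α ≠ 0)
    {p : ι → Θ → ℝ} {w : ι → ℝ} (hp : ∀ i θ, 0 < p i θ) (hpm : ∀ i, AEMeasurable (p i) μ)
    (hw : ∀ i, 0 ≤ w i) (hwsum : ∑ i, w i = 1)
    (hint : Integrable (fun θ => (∑ i, w i * p i θ ^ α) ^ (1 / α)) μ)
    (hpos : 0 < ∫ θ, (∑ i, w i * p i θ ^ α) ^ (1 / α) ∂μ) :
    ∑ i, w i * alphaDiv μ α (p i) (holderPool μ α w p) =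
      (α * (α - 1))⁻¹ * ((∫ θ, (∑ i, w i * p i θ ^ α) ^ (1 / α) ∂μ) ^ α - 1) := by
  set I := ∫ θ, (∑ i, w i * p i θ ^ α) ^ (1 / α) ∂μ
  have hS θ : 0 < ∑ i, w i * p i θ ^ α :=
    sum_mul_pos_of_sum_eq_one hw hwsum fun i => Real.rpow_pos_of_pos (hp i θ) α
  have hpool θ : (∑ i, w i * p i θ ^ α) * holderPool μ α w p θ ^ (1 - α) =
      I⁻¹ ^ (1 - α) * (∑ i, w i * p i θ ^ α) ^ (1 / α) :=
    mul_mul_rpow_one_div_rpow (hS θ) (inv_nonneg.mpr hpos.le) hα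
  have hpool_one : ∫ θ, holderPool μ α w p θ ∂μ = 1 := by
    simp only [holderPool, integral_const_mul]
    exact inv_mul_cancel₀ hpos.ne'
  rw [sum_mul_alphaDiv_eq (ψ := holderPool μ α w p) (fun i θ => (hp i θ).le) hpm hw hwsum
    (fun θ => mul_pos (inv_pos.mpr hpos) (Real.rpow_pos_of_pos (hS θ) _)) (hint.const_mul _)
    hpool_one ((hint.const_mul _).congr (Filter.Eventually.of_forall fun θ => (hpool θ).symm)),
    integral_congr_ae (Filter.Eventually.of_forall hpool), integral_const_mul,
    Real.inv_rpow hpos.le, ← Real.rpow_neg hpos.le, ← Real.rpow_add_one hpos.ne', neg_sub,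
    sub_add_cancel]

end

theorem holder_pool_minimizes_alpha_divergence_general
    {Θ : Type*} [MeasurableSpace Θ] (μ : Measure Θ)
    (α : ℝ) (hα0 : α ≠ 0) (hα1 : α ≠ 1)
    {K : ℕ} (q : Fin K → Θ → ℝ) (w : Fin K → ℝ)
    (hqmeas : ∀ k, Measurable (q k)) (hqpos : ∀ k θ, 0 < q k θ)
    (hwnn : ∀ k, 0 ≤ w k) (hwsum : ∑ k, w k = 1)
    (hcint : Integrable (fun θ => (∑ k, w k * q k θ ^ α) ^ (1 / α)) μ)
    (hcpos : 0 < ∫ θ, (∑ k, w k * q k θ ^ α) ^ (1 / α) ∂μ)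
    (φ : Θ → ℝ) (hφpos : ∀ θ, 0 < φ θ)
    (hφint : ∫ θ, φ θ ∂μ = 1)
    (hdivint : ∀ k, Integrable (fun θ => φ θ * ((q k θ ^ α - φ θ ^ α) / φ θ ^ α)) μ) :
    (let c : ℝ := (∫ θ, (∑ k, w k * q k θ ^ α) ^ (1 / α) ∂μ)⁻¹
     let qa : Θ → ℝ := fun θ => c * (∑ k, w k * q k θ ^ α) ^ (1 / α)
     ∑ k, w k * ((α * (α - 1))⁻¹ *
         ∫ θ, qa θ * ((q k θ ^ α - qa θ ^ α) / qa θ ^ α) ∂μ) ≤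
       ∑ k, w k * ((α * (α - 1))⁻¹ *
         ∫ θ, φ θ * ((q k θ ^ α - φ θ ^ α) / φ θ ^ α) ∂μ)) := by
  intro c qa
  change ∑ k, w k * alphaDiv μ α (q k) (holderPool μ α w q) ≤
    ∑ k, w k * alphaDiv μ α (q k) φ
  have hφint' : Integrable φ μ := .of_integral_ne_zero (by rw [hφint]; exact one_ne_zero)
  have hS θ : 0 < ∑ k, w k * q k θ ^ α :=
    sum_mul_pos_of_sum_eq_one hwnn hwsum fun k => Real.rpow_pos_of_pos (hqpos k θ) α
  have hpool_rpow θ : ((∑ k, w k * q k θ ^ α) ^ (1 / α)) ^ α = ∑ k, w k * q k θ ^ α := by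
    rw [one_div, Real.rpow_inv_rpow (hS θ).le hα0]
  have hφS := integrable_sum_mul_rpow_mul_rpow w hφpos hφint' hdivint
  rw [sum_mul_alphaDiv_holderPool hα0 hqpos (fun k => (hqmeas k).aemeasurable) hwnn hwsum hcint
    hcpos, sum_mul_alphaDiv_eq (fun k θ => (hqpos k θ).le) (fun k => (hqmeas k).aemeasurable)
    hwnn hwsum hφpos hφint' hφint hφS]
  have hpool_le := inv_mul_rpow_integral_sub_one_le
    (g := fun θ => (∑ k, w k * q k θ ^ α) ^ (1 / α)) hα0 hα1
    (fun θ => Real.rpow_pos_of_pos (hS θ) _) hφpos hcint hφint' hcpos hφint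
    (hφS.congr (Filter.Eventually.of_forall fun θ => by simp only [hpool_rpow]))
  simpa only [hpool_rpow] using hpool_le

/-- The normalized weighted Hölder mean of order α minimizes the weighted
sum of α-divergences, where
`D_α(p ‖ φ) = (1/(α(α−1))) ∫ φ(θ) (p(θ)^α − φ(θ)^α)/φ(θ)^α dθ`. -/
theorem holder_pool_minimizes_alpha_divergence
    {Θ : Type*} [MeasurableSpace Θ] (μ : Measure Θ) [SigmaFinite μ]
    (α : ℝ) (hα0 : α ≠ 0) (hα1 : α ≠ 1)
    {K : ℕ} (q : Fin K → Θ → ℝ) (w : Fin K → ℝ)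
    (hqmeas : ∀ k, Measurable (q k)) (hqpos : ∀ k θ, 0 < q k θ)
    (hqint : ∀ k, ∫ θ, q k θ ∂μ = 1)
    (hwnn : ∀ k, 0 ≤ w k) (hwsum : ∑ k, w k = 1)
    (hcint : Integrable (fun θ => (∑ k, w k * q k θ ^ α) ^ (1 / α)) μ)
    (hcpos : 0 < ∫ θ, (∑ k, w k * q k θ ^ α) ^ (1 / α) ∂μ)
    (φ : Θ → ℝ) (hφmeas : Measurable φ) (hφpos : ∀ θ, 0 < φ θ)
    (hφint : ∫ θ, φ θ ∂μ = 1)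
    (hdivint : ∀ k, Integrable (fun θ => φ θ * ((q k θ ^ α - φ θ ^ α) / φ θ ^ α)) μ) :
    (let c : ℝ := (∫ θ, (∑ k, w k * q k θ ^ α) ^ (1 / α) ∂μ)⁻¹
     let qa : Θ → ℝ := fun θ => c * (∑ k, w k * q k θ ^ α) ^ (1 / α)
     ∑ k, w k * ((α * (α - 1))⁻¹ *
         ∫ θ, qa θ * ((q k θ ^ α - qa θ ^ α) / qa θ ^ α) ∂μ) ≤
       ∑ k, w k * ((α * (α - 1))⁻¹ *
         ∫ θ, φ θ * ((q k θ ^ α - φ θ ^ α) / φ θ ^ α) ∂μ)) :=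
  holder_pool_minimizes_alpha_divergence_general μ α hα0 hα1 q w hqmeas hqpos hwnn hwsum hcint hcpos
    φ hφpos hφint hdivint
end

section
/- Characterization of multiplicative pooling: a pooling function g on positive opinion profiles satisfies individualized Bayesianity and g[q_0,…,q_0] = q_0 for a positive density q_0 if and only if g is the multiplicative pooling function g[q_1,…,q_K](θ) = c q_0(θ)^{1−K} ∏_{k=1}^K q_k(θ) with c the normalizing constant. -/
/-!
Every admissible density `q k` is the Bayesian update of `q0` by the bounded likelihood
`q k / q0`. Starting from the calibrated profile `(q0, …, q0)`, on which `g` returns `q0`, and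
replacing the agents' opinions one at a time, individualized Bayesianity forces `g q` to be
`q0` updated by `∏ k, q k / q0`, which is the multiplicative pool. Conversely, updating one
agent by `ℓ` multiplies `∏ k, q k / q0` by `ℓ` up to a constant, and constants are lost in the
normalization, so the multiplicative pool is individually Bayesian.
-/

open MeasureTheory

variable {Θ : Type*} [MeasurableSpace Θ]

/-- Bayesian update of a density `p` by a likelihood `ℓ`. -/
noncomputable def bayesUpdate (μ : Measure Θ) (ℓ p : Θ → ℝ) : Θ → ℝ :=
  fun θ => ℓ θ * p θ / ∫ x, ℓ x * p x ∂μ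

/-- `ℓ` is a bounded, positive (measurable) likelihood function. -/
def IsBddPos (ℓ : Θ → ℝ) : Prop :=
  Measurable ℓ ∧ (∀ θ, 0 < ℓ θ) ∧ ∃ M : ℝ, ∀ θ, ℓ θ ≤ M

/-- A positive opinion profile whose components have a bounded ratio to the
calibrating density `q0`. -/
def IsAdmissible (μ : Measure Θ) (q0 : Θ → ℝ) {K : ℕ} (q : Fin K → Θ → ℝ) : Prop :=
  ∀ k, Measurable (q k) ∧ (∀ θ, 0 < q k θ) ∧ (∫ θ, q k θ ∂μ = 1) ∧
    ∃ M : ℝ, ∀ θ, q k θ / q0 θ ≤ M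

/-- Individualized Bayesianity: updating a single agent's density commutes with fusion. -/
def IndividualizedBayesianity (μ : Measure Θ) (q0 : Θ → ℝ) {K : ℕ}
    (g : (Fin K → Θ → ℝ) → Θ → ℝ) : Prop :=
  ∀ q : Fin K → Θ → ℝ, IsAdmissible μ q0 q → ∀ k : Fin K, ∀ ℓ : Θ → ℝ, IsBddPos ℓ →
    g (Function.update q k (bayesUpdate μ ℓ (q k))) =ᵐ[μ] bayesUpdate μ ℓ (g q)

open Finset

theorem Fintype.prod_update_mul_self {ι M : Type*} [Fintype ι] [DecidableEq ι] [CommMonoid M]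
    (f : ι → M) (i : ι) (c : M) : ∏ j, Function.update f i (c * f i) j = c * ∏ j, f j := by
  rw [prod_update_of_mem (mem_univ i), sdiff_singleton_eq_erase, mul_assoc,
    mul_prod_erase univ f (mem_univ i)]

noncomputable def multiplicativePool (μ : Measure Θ) (q0 : Θ → ℝ) {K : ℕ}
    (q : Fin K → Θ → ℝ) : Θ → ℝ :=
  fun θ => (∫ x, q0 x ^ ((1 : ℝ) - K) * ∏ k, q k x ∂μ)⁻¹ * (q0 θ ^ ((1 : ℝ) - K) * ∏ k, q k θ)

/-- `IsAdmissible μ q0 q` unfolds to `∀ k, IsAdmissibleDensity μ q0 (q k)`. -/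
def IsAdmissibleDensity (μ : Measure Θ) (q0 p : Θ → ℝ) : Prop :=
  Measurable p ∧ (∀ θ, 0 < p θ) ∧ (∫ θ, p θ ∂μ = 1) ∧ ∃ M : ℝ, ∀ θ, p θ / q0 θ ≤ M

section

variable {μ : Measure Θ}

theorem ne_zero_of_integral_eq_one {f : Θ → ℝ} (h : ∫ θ, f θ ∂μ = 1) : μ ≠ 0 := by
  rintro rfl
  simp at h

namespace IsBddPos

theorem one : IsBddPos (1 : Θ → ℝ) :=
  ⟨measurable_const, fun _ => one_pos, 1, fun _ => le_rfl⟩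

theorem mul {f g : Θ → ℝ} (hf : IsBddPos f) (hg : IsBddPos g) : IsBddPos (f * g) := by
  obtain ⟨hfm, hfpos, M, hM⟩ := hf
  obtain ⟨hgm, hgpos, N, hN⟩ := hg
  refine ⟨hfm.mul hgm, fun θ => mul_pos (hfpos θ) (hgpos θ), M * N, fun θ => ?_⟩
  exact mul_le_mul (hM θ) (hN θ) (hgpos θ).le ((hfpos θ).le.trans (hM θ))

theorem finset_prod {ι : Type*} (s : Finset ι) {f : ι → Θ → ℝ} (hf : ∀ i ∈ s, IsBddPos (f i)) :
    IsBddPos fun θ => ∏ i ∈ s, f i θ := by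
  simp_rw [← Finset.prod_apply]
  exact prod_induction f IsBddPos (fun _ _ => mul) one hf

theorem integrable_mul {ℓ p : Θ → ℝ} (hℓ : IsBddPos ℓ) (hp : Integrable p μ) :
    Integrable (fun θ => ℓ θ * p θ) μ := by
  obtain ⟨hℓm, hℓpos, M, hM⟩ := hℓ
  refine hp.bdd_mul hℓm.aestronglyMeasurable (c := M) (Filter.Eventually.of_forall fun θ => ?_)
  rw [Real.norm_of_nonneg (hℓpos θ).le]
  exact hM θ

theorem integral_mul_pos {ℓ p : Θ → ℝ} (hℓ : IsBddPos ℓ) (hp : Integrable p μ)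
    (hpos : ∀ θ, 0 < p θ) (hμ : μ ≠ 0) : 0 < ∫ θ, ℓ θ * p θ ∂μ := by
  have hℓp : ∀ θ, 0 < ℓ θ * p θ := fun θ => mul_pos (hℓ.2.1 θ) (hpos θ)
  rw [integral_pos_iff_support_of_nonneg (fun θ => (hℓp θ).le) (hℓ.integrable_mul hp),
    Function.support_eq_univ fun θ => (hℓp θ).ne']
  exact Measure.measure_univ_pos.mpr hμ

end IsBddPos

theorem bayesUpdate_congr_ae {ℓ p p' : Θ → ℝ} (h : p =ᵐ[μ] p') :
    bayesUpdate μ ℓ p =ᵐ[μ] bayesUpdate μ ℓ p' := by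
  have hint : ∫ x, ℓ x * p x ∂μ = ∫ x, ℓ x * p' x ∂μ :=
    integral_congr_ae (h.mono fun x hx => by simp only [hx])
  filter_upwards [h] with θ hθ
  simp only [bayesUpdate, hθ, hint]

theorem bayesUpdate_one {p : Θ → ℝ} (hp : ∫ θ, p θ ∂μ = 1) :
    bayesUpdate μ (fun _ => 1) p = p := by
  funext θ
  simp [bayesUpdate, hp]

theorem bayesUpdate_const_mul {ℓ p : Θ → ℝ} {c : ℝ} (hc : c ≠ 0) :
    bayesUpdate μ (fun θ => c * ℓ θ) p = bayesUpdate μ ℓ p := by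
  funext θ
  simp only [bayesUpdate, mul_assoc, integral_const_mul]
  rw [mul_div_mul_left _ _ hc]

theorem bayesUpdate_bayesUpdate {ℓ₁ ℓ₂ p : Θ → ℝ} (h : ∫ θ, ℓ₁ θ * p θ ∂μ ≠ 0) :
    bayesUpdate μ ℓ₂ (bayesUpdate μ ℓ₁ p) = bayesUpdate μ (fun θ => ℓ₂ θ * ℓ₁ θ) p := by
  funext θ
  simp only [bayesUpdate, mul_div_assoc', integral_div, mul_assoc]
  rw [div_div_div_cancel_right₀ h]

theorem bayesUpdate_div_self {p q0 : Θ → ℝ} (hq0pos : ∀ θ, 0 < q0 θ) (hp : ∫ θ, p θ ∂μ = 1) :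
    bayesUpdate μ (fun θ => p θ / q0 θ) q0 = p := by
  funext θ
  simp only [bayesUpdate, div_mul_cancel₀ _ (hq0pos _).ne', hp, div_one]

end

section

variable {μ : Measure Θ} {q0 : Θ → ℝ}

theorem isAdmissibleDensity_self (hq0meas : Measurable q0) (hq0pos : ∀ θ, 0 < q0 θ)
    (hq0int : ∫ θ, q0 θ ∂μ = 1) : IsAdmissibleDensity μ q0 q0 :=
  ⟨hq0meas, hq0pos, hq0int, 1, fun θ => (div_self (hq0pos θ).ne').le⟩

namespace IsAdmissibleDensity

variable {p : Θ → ℝ}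

theorem isBddPos_div (hp : IsAdmissibleDensity μ q0 p) (hq0meas : Measurable q0)
    (hq0pos : ∀ θ, 0 < q0 θ) : IsBddPos fun θ => p θ / q0 θ :=
  ⟨hp.1.div hq0meas, fun θ => div_pos (hp.2.1 θ) (hq0pos θ), hp.2.2.2⟩

theorem integral_mul_pos (hp : IsAdmissibleDensity μ q0 p) {ℓ : Θ → ℝ} (hℓ : IsBddPos ℓ) :
    0 < ∫ θ, ℓ θ * p θ ∂μ :=
  hℓ.integral_mul_pos (integrable_of_integral_eq_one hp.2.2.1) hp.2.1
    (ne_zero_of_integral_eq_one hp.2.2.1)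

theorem bayesUpdate (hp : IsAdmissibleDensity μ q0 p) (hq0pos : ∀ θ, 0 < q0 θ) {ℓ : Θ → ℝ}
    (hℓ : IsBddPos ℓ) : IsAdmissibleDensity μ q0 (bayesUpdate μ ℓ p) := by
  have hZ : 0 < ∫ θ, ℓ θ * p θ ∂μ := hp.integral_mul_pos hℓ
  set Z := ∫ θ, ℓ θ * p θ ∂μ
  obtain ⟨hpm, hppos, -, N, hN⟩ := hp
  obtain ⟨hℓm, hℓpos, M, hM⟩ := hℓ
  refine ⟨(hℓm.mul hpm).div_const Z, fun θ => div_pos (mul_pos (hℓpos θ) (hppos θ)) hZ,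
    by simp only [_root_.bayesUpdate, integral_div]; exact div_self hZ.ne', M * N / Z,
    fun θ => ?_⟩
  calc ℓ θ * p θ / Z / q0 θ = ℓ θ * (p θ / q0 θ) / Z := by ring
    _ ≤ M * N / Z := by
      have hratio : 0 ≤ p θ / q0 θ := (div_pos (hppos θ) (hq0pos θ)).le
      gcongr
      exacts [(hℓpos θ).le.trans (hM θ), hM θ, hN θ]

end IsAdmissibleDensity

theorem IsAdmissible.update {K : ℕ} {q : Fin K → Θ → ℝ} (hq : IsAdmissible μ q0 q) (k : Fin K)
    {p : Θ → ℝ} (hp : IsAdmissibleDensity μ q0 p) :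
    IsAdmissible μ q0 (Function.update q k p) :=
  (Function.forall_update_iff q fun _ r => IsAdmissibleDensity μ q0 r).mpr
    ⟨hp, fun j _ => hq j⟩

theorem IsAdmissible.piecewise {K : ℕ} {q q' : Fin K → Θ → ℝ} (hq : IsAdmissible μ q0 q)
    (hq' : IsAdmissible μ q0 q') (s : Finset (Fin K)) : IsAdmissible μ q0 (s.piecewise q q') :=
  fun k => s.piecewise_cases q q' (fun r => IsAdmissibleDensity μ q0 r) (hq k) (hq' k)

end

section

variable {μ : Measure Θ} {q0 : Θ → ℝ} {K : ℕ}

theorem multiplicativePool_eq_bayesUpdate (hq0pos : ∀ θ, 0 < q0 θ) (q : Fin K → Θ → ℝ) :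
    multiplicativePool μ q0 q = bayesUpdate μ (fun θ => ∏ k, q k θ / q0 θ) q0 := by
  have hdensity : ∀ θ, q0 θ ^ ((1 : ℝ) - K) * ∏ k, q k θ = (∏ k, q k θ / q0 θ) * q0 θ := by
    intro θ
    rw [prod_div_distrib, prod_const, card_univ, Fintype.card_fin, Real.rpow_sub (hq0pos θ),
      Real.rpow_one, Real.rpow_natCast]
    field_simp
  funext θ
  simp only [multiplicativePool, bayesUpdate, hdensity, inv_mul_eq_div]

theorem multiplicativePool_const (hq0 : IsAdmissibleDensity μ q0 q0) :
    multiplicativePool μ q0 (fun _ : Fin K => q0) = q0 := by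
  rw [multiplicativePool_eq_bayesUpdate hq0.2.1]
  simp_rw [div_self (hq0.2.1 _).ne', prod_const_one]
  exact bayesUpdate_one hq0.2.2.1

theorem multiplicativePool_update_bayesUpdate (hq0 : IsAdmissibleDensity μ q0 q0)
    {q : Fin K → Θ → ℝ} (hq : IsAdmissible μ q0 q) (k : Fin K) {ℓ : Θ → ℝ} (hℓ : IsBddPos ℓ) :
    multiplicativePool μ q0 (Function.update q k (bayesUpdate μ ℓ (q k))) =
      bayesUpdate μ ℓ (multiplicativePool μ q0 q) := by
  set Z := ∫ θ, ℓ θ * q k θ ∂μ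
  have hZ : Z ≠ 0 := (IsAdmissibleDensity.integral_mul_pos (hq k) hℓ).ne'
  have hratio : ∀ θ, ∏ j, Function.update q k (bayesUpdate μ ℓ (q k)) j θ / q0 θ =
      Z⁻¹ * ℓ θ * ∏ j, q j θ / q0 θ := by
    intro θ
    rw [← Fintype.prod_update_mul_self _ k]
    refine prod_congr rfl fun j _ => ?_
    rcases eq_or_ne j k with rfl | hj
    · simp only [Function.update_self, bayesUpdate]
      ring
    · simp only [Function.update_of_ne hj]
  have hΛ : IsBddPos fun θ => ∏ j, q j θ / q0 θ :=
    IsBddPos.finset_prod univ fun j _ => IsAdmissibleDensity.isBddPos_div (hq j) hq0.1 hq0.2.1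
  rw [multiplicativePool_eq_bayesUpdate hq0.2.1, multiplicativePool_eq_bayesUpdate hq0.2.1,
    bayesUpdate_bayesUpdate (hq0.integral_mul_pos hΛ).ne']
  simp_rw [hratio, mul_assoc]
  exact bayesUpdate_const_mul (inv_ne_zero hZ)

variable {g : (Fin K → Θ → ℝ) → Θ → ℝ}

theorem IndividualizedBayesianity.apply_piecewise_ae_eq (hIB : IndividualizedBayesianity μ q0 g)
    (hq0 : IsAdmissibleDensity μ q0 q0) (hbase : g (fun _ => q0) =ᵐ[μ] q0)
    {q : Fin K → Θ → ℝ} (hq : IsAdmissible μ q0 q) (s : Finset (Fin K)) :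
    g (s.piecewise q fun _ => q0) =ᵐ[μ] bayesUpdate μ (fun θ => ∏ k ∈ s, q k θ / q0 θ) q0 := by
  induction s using Finset.induction_on with
  | empty =>
    simp only [piecewise_empty, prod_empty, bayesUpdate_one hq0.2.2.1]
    exact hbase
  | insert a s ha ih =>
    set P := s.piecewise q fun _ => q0
    have hratio : IsBddPos fun θ => q a θ / q0 θ :=
      IsAdmissibleDensity.isBddPos_div (hq a) hq0.1 hq0.2.1
    have hupdate : Function.update P a (bayesUpdate μ (fun θ => q a θ / q0 θ) (P a)) =
        (insert a s).piecewise q fun _ => q0 := by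
      rw [show P a = q0 from piecewise_eq_of_notMem _ _ _ ha,
        bayesUpdate_div_self hq0.2.1 (hq a).2.2.1, piecewise_insert]
    have hΛ : IsBddPos fun θ => ∏ k ∈ s, q k θ / q0 θ :=
      IsBddPos.finset_prod s fun k _ => IsAdmissibleDensity.isBddPos_div (hq k) hq0.1 hq0.2.1
    rw [← hupdate]
    calc _ =ᵐ[μ] bayesUpdate μ (fun θ => q a θ / q0 θ) (g P) :=
          hIB P (hq.piecewise (fun _ => hq0) s) a _ hratio
      _ =ᵐ[μ] bayesUpdate μ (fun θ => q a θ / q0 θ)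
          (bayesUpdate μ (fun θ => ∏ k ∈ s, q k θ / q0 θ) q0) := bayesUpdate_congr_ae ih
      _ = _ := by
        rw [bayesUpdate_bayesUpdate (hq0.integral_mul_pos hΛ).ne']
        simp_rw [prod_insert ha]

theorem IndividualizedBayesianity.ae_eq_multiplicativePool
    (hIB : IndividualizedBayesianity μ q0 g) (hq0 : IsAdmissibleDensity μ q0 q0)
    (hbase : g (fun _ => q0) =ᵐ[μ] q0) {q : Fin K → Θ → ℝ} (hq : IsAdmissible μ q0 q) :
    g q =ᵐ[μ] multiplicativePool μ q0 q := by
  simpa only [piecewise_univ, multiplicativePool_eq_bayesUpdate hq0.2.1] using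
    hIB.apply_piecewise_ae_eq hq0 hbase hq univ

theorem individualizedBayesianity_of_ae_eq_multiplicativePool (hq0 : IsAdmissibleDensity μ q0 q0)
    (h : ∀ q, IsAdmissible μ q0 q → g q =ᵐ[μ] multiplicativePool μ q0 q) :
    IndividualizedBayesianity μ q0 g := by
  intro q hq k ℓ hℓ
  calc g (Function.update q k (bayesUpdate μ ℓ (q k)))
      =ᵐ[μ] multiplicativePool μ q0 (Function.update q k (bayesUpdate μ ℓ (q k))) :=
        h _ (hq.update k (IsAdmissibleDensity.bayesUpdate (hq k) hq0.2.1 hℓ))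
    _ = bayesUpdate μ ℓ (multiplicativePool μ q0 q) :=
        multiplicativePool_update_bayesUpdate hq0 hq k hℓ
    _ =ᵐ[μ] bayesUpdate μ ℓ (g q) := bayesUpdate_congr_ae (h q hq).symm

end

theorem multiplicative_pooling_characterization_general
    (μ : Measure Θ) {K : ℕ}
    (q0 : Θ → ℝ) (hq0meas : Measurable q0) (hq0pos : ∀ θ, 0 < q0 θ)
    (hq0int : ∫ θ, q0 θ ∂μ = 1)
    (g : (Fin K → Θ → ℝ) → Θ → ℝ) :
    (IndividualizedBayesianity μ q0 g ∧ g (fun _ => q0) =ᵐ[μ] q0) ↔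
      ∀ q : Fin K → Θ → ℝ, IsAdmissible μ q0 q →
        g q =ᵐ[μ] fun θ =>
          (∫ x, q0 x ^ ((1 : ℝ) - K) * ∏ k, q k x ∂μ)⁻¹ *
            (q0 θ ^ ((1 : ℝ) - K) * ∏ k, q k θ) := by
  have hq0 := isAdmissibleDensity_self hq0meas hq0pos hq0int
  refine ⟨fun ⟨hIB, hbase⟩ q hq => hIB.ae_eq_multiplicativePool hq0 hbase hq, fun h =>
    ⟨individualizedBayesianity_of_ae_eq_multiplicativePool hq0 h, ?_⟩⟩
  exact (h _ fun _ => hq0).trans (multiplicativePool_const hq0).eventuallyEq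

/-- A pooling function on positive opinion profiles satisfies
individualized Bayesianity together with `g[q0,…,q0] = q0` if and only if it is the
multiplicative pooling function with calibrating pdf `q0`. -/
theorem multiplicative_pooling_characterization
    (μ : Measure Θ) [SigmaFinite μ] {K : ℕ}
    (q0 : Θ → ℝ) (hq0meas : Measurable q0) (hq0pos : ∀ θ, 0 < q0 θ)
    (hq0int : ∫ θ, q0 θ ∂μ = 1)
    (g : (Fin K → Θ → ℝ) → Θ → ℝ)
    (hg : ∀ q, IsAdmissible μ q0 q →
      Measurable (g q) ∧ (∀ θ, 0 ≤ g q θ) ∧ ∫ θ, g q θ ∂μ = 1) :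
    (IndividualizedBayesianity μ q0 g ∧ g (fun _ => q0) =ᵐ[μ] q0) ↔
      ∀ q : Fin K → Θ → ℝ, IsAdmissible μ q0 q →
        g q =ᵐ[μ] fun θ =>
          (∫ x, q0 x ^ ((1 : ℝ) - K) * ∏ k, q k x ∂μ)⁻¹ *
            (q0 θ ^ ((1 : ℝ) - K) * ∏ k, q k θ) :=
  multiplicative_pooling_characterization_general μ q0 hq0meas hq0pos hq0int g
end

section
/- Scalar supra-Bayesian Gaussian fusion is a weighted log-linear pool: let y_k = h_k θ + n_k with h_k ∈ ℝ^{d_k} nonzero, n = (n_1,…,n_K) zero-mean Gaussian with block covariance Σ (blocks Σ_{kk'}, each Σ_{kk} positive definite), local statistics t_k = vₖᵀ y_k with vₖᵀ = (h_kᵀ Σ_{kk}^{-1} h_k)^{-1} h_kᵀ Σ_{kk}^{-1}, and Σ̃ = V Σ Vᵀ nonsingular where V = diag(v₁ᵀ,…,v_Kᵀ). Define local likelihoods ℓ_k(θ) ∝ exp(−(θ h_k − y_k)ᵀ Σ_{kk}^{-1} (θ h_k − y_k)/2) and global t-likelihood λ(θ) ∝ exp(−(t − 1_K θ)ᵀ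 Σ̃^{-1} (t − 1_K θ)/2). Then λ(θ) ∝ ∏_{k=1}^K ℓ_k(θ)^{w_k} as functions of θ, with w_k = (1_Kᵀ Σ̃^{-1} e_k)/(h_kᵀ Σ_{kk}^{-1} h_k). -/
/-!
Both likelihoods are exponentials of quadratics in `θ`, so it suffices to match the exponents up
to an additive constant. Completing the square, the `k`-th local exponent is `a_k (θ - t_k)²` up
to a constant, where `a_k = h_kᵀ Σ_{kk}⁻¹ h_k` and `t_k` is the generalized least-squares estimate
of `θ` from `y_k`. Since `Σ̃⁻¹` is symmetric, the global exponent is `∑_k s_k (θ - t_k)²` up to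
a constant, where `s_k = 1ᵀ Σ̃⁻¹ e_k` is the `k`-th column sum of `Σ̃⁻¹`. The weights
`w_k = s_k / a_k` are exactly those making the two agree.
-/

open Matrix

theorem Matrix.IsSymm.dotProduct_mulVec_comm {n R : Type*} [Fintype n] [CommSemiring R]
    {M : Matrix n n R} (hM : M.IsSymm) (x y : n → R) : x ⬝ᵥ M *ᵥ y = y ⬝ᵥ M *ᵥ x := by
  rw [dotProduct_mulVec, ← mulVec_transpose, hM.eq, dotProduct_comm]

theorem Matrix.IsSymm.dotProduct_mulVec_smul_sub {n R : Type*} [Fintype n] [CommRing R]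
    {M : Matrix n n R} (hM : M.IsSymm) (x y : n → R) (θ : R) :
    (θ • x - y) ⬝ᵥ M *ᵥ (θ • x - y) =
      θ ^ 2 * (x ⬝ᵥ M *ᵥ x) - 2 * θ * (x ⬝ᵥ M *ᵥ y) + y ⬝ᵥ M *ᵥ y := by
  simp only [mulVec_sub, mulVec_smul, sub_dotProduct, dotProduct_sub, smul_dotProduct,
    dotProduct_smul, smul_eq_mul, hM.dotProduct_mulVec_comm y x]
  ring

theorem Matrix.IsSymm.dotProduct_mulVec_smul_sub_eq_sq {n 𝕜 : Type*} [Fintype n] [Field 𝕜]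
    {M : Matrix n n 𝕜} (hM : M.IsSymm) (h y : n → 𝕜) (ha : h ⬝ᵥ M *ᵥ h ≠ 0) (θ : 𝕜) :
    let a := h ⬝ᵥ M *ᵥ h
    let t := (a⁻¹ • (M *ᵥ h)) ⬝ᵥ y
    (θ • h - y) ⬝ᵥ M *ᵥ (θ • h - y) = a * (θ - t) ^ 2 + (y ⬝ᵥ M *ᵥ y - a * t ^ 2) := by
  intro a t
  have hat : a * t = h ⬝ᵥ M *ᵥ y := by
    simp only [a, t]
    rw [smul_dotProduct, smul_eq_mul, ← mul_assoc, mul_inv_cancel₀ ha, one_mul, dotProduct_comm,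
      hM.dotProduct_mulVec_comm]
  rw [hM.dotProduct_mulVec_smul_sub, ← hat]
  ring

theorem Matrix.IsSymm.dotProduct_mulVec_sub_smul_one {n R : Type*} [Fintype n] [CommRing R]
    {U : Matrix n n R} (hU : U.IsSymm) (t : n → R) (θ : R) :
    (t - θ • 1) ⬝ᵥ U *ᵥ (t - θ • 1) =
      ∑ k, (∑ j, U j k) * (θ - t k) ^ 2 + (t ⬝ᵥ U *ᵥ t - ∑ k, (∑ j, U j k) * t k ^ 2) := by
  have hsum : ∀ s : n → R, 1 ⬝ᵥ U *ᵥ s = ∑ k, (∑ j, U j k) * s k := fun s => by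
    simp only [mulVec, dotProduct, Pi.one_apply, one_mul, Finset.sum_mul]
    exact Finset.sum_comm
  rw [← neg_sub, mulVec_neg, neg_dotProduct, dotProduct_neg, neg_neg,
    hU.dotProduct_mulVec_smul_sub, hsum, hsum]
  simp only [Pi.one_apply, mul_one, sub_sq, mul_add, mul_sub, Finset.sum_add_distrib,
    Finset.sum_sub_distrib, ← Finset.sum_mul, mul_left_comm _ (2 * θ), ← Finset.mul_sum]
  ring

theorem Matrix.IsSymm.blockwise_dotProduct_mulVec {ι R : Type*} {d : ι → Type*}
    [∀ k, Fintype (d k)] [CommSemiring R]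
    {S : Matrix (Σ k, d k) (Σ k, d k) R} (hS : S.IsSymm) (v : ∀ k, d k → R) :
    (Matrix.of fun k k' => v k ⬝ᵥ (Matrix.of fun i j => S ⟨k, i⟩ ⟨k', j⟩) *ᵥ v k').IsSymm := by
  ext k k'
  simp only [transpose_apply, of_apply]
  rw [dotProduct_comm, dotProduct_mulVec, ← mulVec_transpose]
  congr 2
  ext i j
  exact hS.apply _ _

theorem Real.exists_pos_exp_eq_mul_prod_exp_rpow {ι : Type*} [Fintype ι] (f : ℝ → ℝ)
    (g : ι → ℝ → ℝ) (w : ι → ℝ) (c : ℝ) (h : ∀ θ, f θ = c + ∑ k, w k * g k θ) :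
    ∃ C : ℝ, 0 < C ∧ ∀ θ, Real.exp (f θ) = C * ∏ k, Real.exp (g k θ) ^ w k := by
  refine ⟨Real.exp c, Real.exp_pos c, fun θ => ?_⟩
  simp only [h, ← Real.exp_mul, ← Real.exp_sum, ← Real.exp_add, mul_comm (g _ θ)]

/-- Scalar supra-Bayesian Gaussian fusion is a weighted log-linear pool:
with local statistics `t_k = v_kᵀ y_k`, `Σ̃ = V Σ Vᵀ` nonsingular, the global
t-likelihood satisfies `λ(θ) ∝ ∏_k ℓ_k(θ)^{w_k}` with
`w_k = (1_Kᵀ Σ̃⁻¹ e_k)/(h_kᵀ Σ_{kk}⁻¹ h_k)`. -/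
theorem scalar_supra_bayesian_gaussian_fusion
    {K : ℕ} (d : Fin K → ℕ)
    (Sfull : Matrix ((k : Fin K) × Fin (d k)) ((k : Fin K) × Fin (d k)) ℝ)
    (hSsymm : Sfull.IsSymm)
    (hvec : (k : Fin K) → Fin (d k) → ℝ) (hne : ∀ k, hvec k ≠ 0)
    (y : (k : Fin K) → Fin (d k) → ℝ)
    (hblk : ∀ k,
      (Matrix.of fun i j => Sfull ⟨k, i⟩ ⟨k, j⟩ :
        Matrix (Fin (d k)) (Fin (d k)) ℝ).PosDef) :
    (let Skk : (k : Fin K) → Matrix (Fin (d k)) (Fin (d k)) ℝ :=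
      fun k => Matrix.of fun i j => Sfull ⟨k, i⟩ ⟨k, j⟩
     -- a k = h_kᵀ Σ_{kk}⁻¹ h_k
     let a : Fin K → ℝ :=
      fun k => dotProduct (hvec k) ((Skk k)⁻¹.mulVec (hvec k))
     -- v_kᵀ = (h_kᵀ Σ_{kk}⁻¹ h_k)⁻¹ h_kᵀ Σ_{kk}⁻¹ (as a column vector, using symmetry)
     let v : (k : Fin K) → Fin (d k) → ℝ :=
      fun k => (a k)⁻¹ • ((Skk k)⁻¹.mulVec (hvec k))
     -- local statistics t_k = v_kᵀ y_k
     let t : Fin K → ℝ := fun k => dotProduct (v k) (y k)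
     -- Σ̃ = V Σ Vᵀ, blockwise: Σ̃_{kk'} = v_kᵀ Σ_{kk'} v_{k'}
     let Stil : Matrix (Fin K) (Fin K) ℝ :=
      Matrix.of fun k k' => dotProduct (v k)
        ((Matrix.of fun i j => Sfull ⟨k, i⟩ ⟨k', j⟩ :
          Matrix (Fin (d k)) (Fin (d k')) ℝ).mulVec (v k'))
     -- weights w_k = (1_Kᵀ Σ̃⁻¹ e_k) / a_k
     let w : Fin K → ℝ := fun k => (∑ j, Stil⁻¹ j k) / a k
     -- local observation likelihoods ℓ_k(θ) ∝ exp(−(θh_k − y_k)ᵀ Σ_{kk}⁻¹ (θh_k − y_k)/2)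
     let ℓ : Fin K → ℝ → ℝ := fun k θ =>
      Real.exp (-(dotProduct (θ • hvec k - y k)
        ((Skk k)⁻¹.mulVec (θ • hvec k - y k))) / 2)
     -- global t-likelihood λ(θ) ∝ exp(−(t − θ1_K)ᵀ Σ̃⁻¹ (t − θ1_K)/2)
     let lam : ℝ → ℝ := fun θ =>
      Real.exp (-(dotProduct (t - θ • (1 : Fin K → ℝ))
        (Stil⁻¹.mulVec (t - θ • (1 : Fin K → ℝ)))) / 2)
     IsUnit Stil.det →
       ∃ c : ℝ, 0 < c ∧ ∀ θ : ℝ, lam θ = c * ∏ k, ℓ k θ ^ w k) := by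
  intro Skk a v t Stil w ℓ lam _
  have hSkk_inv : ∀ k, (Skk k)⁻¹.IsSymm := fun k =>
    (isHermitian_iff_isSymm.mp (hblk k).isHermitian).inv
  have ha : ∀ k, a k ≠ 0 := fun k => by
    simpa using ((hblk k).inv.dotProduct_mulVec_pos (hne k)).ne'
  have hStil_inv : Stil⁻¹.IsSymm := (IsSymm.blockwise_dotProduct_mulVec hSsymm v).inv
  refine Real.exists_pos_exp_eq_mul_prod_exp_rpow _ _ w
    ((∑ k, w k * (y k ⬝ᵥ (Skk k)⁻¹ *ᵥ y k - a k * t k ^ 2)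
      - (t ⬝ᵥ Stil⁻¹ *ᵥ t - ∑ k, (∑ j, Stil⁻¹ j k) * t k ^ 2)) / 2) fun θ => ?_
  have hwa : ∀ k, ∑ j, Stil⁻¹ j k = w k * a k := fun k => (div_mul_cancel₀ _ (ha k)).symm
  rw [hStil_inv.dotProduct_mulVec_sub_smul_one]
  simp only [(hSkk_inv _).dotProduct_mulVec_smul_sub_eq_sq _ _ (ha _), hwa]
  simp only [mul_neg, mul_add, mul_sub, neg_add, add_div, mul_div_assoc', Finset.sum_add_distrib,
    Finset.sum_sub_distrib, ← Finset.sum_div, Finset.sum_neg_distrib, mul_assoc]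
  ring
end

section
/- In the private/shared observation model, the supra-Bayesian weights are w_k = 1 − ((K−1)/r_k)(Σ_{k'=0}^K 1/r_{k'})^{-1}: consider the K×K matrix Σ̃ with diagonal entries Σ̃_{kk} = 1/(r_0 + r_k) and off-diagonal entries Σ̃_{kk'} = r_0/((r_0+r_k)(r_0+r_{k'})), where r_0, r_1, …, r_K are positive integers. Then Σ̃ is invertible and w_k := (1_Kᵀ Σ̃^{-1} e_k)/(r_0 + r_k) equals 1 − ((K−1)/r_k)(Σ_{k'=0}^K 1/r_{k'})^{-1}. -/
open Matrix

/-!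
Write `b_k = r_0 + r_k`. Then `Σ̃ = diag(r_k / b_k²) + u vᵀ` with `u_k = r_0 / b_k` and
`v_k = 1 / b_k`, so the Sherman–Morrison formula gives
`Σ̃⁻¹ = diag(b_k² / r_k) - P⁻¹ w wᵀ` with `w_k = b_k / r_k` and `P = Σ_{k=0}^K 1/r_k`.
Since `Σ_j w_j = K - 1 + r_0 P`, the `k`-th column sum of `Σ̃⁻¹`, divided by `b_k`, is
`w_k - (K - 1 + r_0 P) / (P r_k) = 1 - (K - 1) / (r_k P)`.
-/

theorem Matrix.diagonal_add_vecMulVec_mul_eq_one {n α : Type*} [Fintype n] [DecidableEq n]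
    [Field α] (d u v : n → α) (hd : ∀ i, d i ≠ 0) (hs : 1 + v ⬝ᵥ (d⁻¹ * u) ≠ 0) :
    (diagonal d + vecMulVec u v) *
      (diagonal d⁻¹ - (1 + v ⬝ᵥ (d⁻¹ * u))⁻¹ • vecMulVec (d⁻¹ * u) (d⁻¹ * v)) = 1 := by
  have hdd : diagonal d * diagonal d⁻¹ = 1 := by
    rw [diagonal_mul_diagonal, ← diagonal_one]
    exact congrArg diagonal (funext fun i => mul_inv_cancel₀ (hd i))
  have hdu : diagonal d *ᵥ (d⁻¹ * u) = u := by
    ext i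
    simp [mulVec_diagonal, ← mul_assoc, mul_inv_cancel₀ (hd i)]
  have hvd : v ᵥ* diagonal d⁻¹ = d⁻¹ * v := by
    ext i
    simp [vecMul_diagonal, mul_comm]
  rw [add_mul, mul_sub, mul_sub, hdd, Matrix.mul_smul, Matrix.mul_smul, mul_vecMulVec, hdu,
    vecMulVec_mul, vecMulVec_mul_vecMulVec, hvd, vecMulVec_smul, smul_smul]
  have hcs : (1 + v ⬝ᵥ (d⁻¹ * u))⁻¹ * v ⬝ᵥ (d⁻¹ * u) = 1 - (1 + v ⬝ᵥ (d⁻¹ * u))⁻¹ := by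
    field_simp
    ring
  rw [hcs, sub_smul, one_smul]
  abel

open Finset

section SharedObservation

variable {ι : Type*}

noncomputable def sharedCov [DecidableEq ι] (r0 : ℝ) (r : ι → ℝ) : Matrix ι ι ℝ :=
  of fun k k' => if k = k' then 1 / (r0 + r k) else r0 / ((r0 + r k) * (r0 + r k'))

noncomputable def totalPrecision [Fintype ι] (r0 : ℝ) (r : ι → ℝ) : ℝ :=
  r0⁻¹ + ∑ k, (r k)⁻¹

noncomputable def sharedCovInv [Fintype ι] [DecidableEq ι] (r0 : ℝ) (r : ι → ℝ) :
    Matrix ι ι ℝ :=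
  diagonal (fun k => (r0 + r k) ^ 2 / r k) -
    (totalPrecision r0 r)⁻¹ • vecMulVec (fun k => (r0 + r k) / r k) (fun k => (r0 + r k) / r k)

variable {r0 : ℝ} {r : ι → ℝ}

theorem sharedCov_eq_diagonal_add_vecMulVec [DecidableEq ι] (h : ∀ k, r0 + r k ≠ 0) :
    sharedCov r0 r = diagonal (fun k => r k / (r0 + r k) ^ 2) +
      vecMulVec (fun k => r0 / (r0 + r k)) (fun k => 1 / (r0 + r k)) := by
  ext i j
  have := h i
  have := h j
  rcases eq_or_ne i j with rfl | hij
  · simp only [sharedCov, of_apply, if_pos, Matrix.add_apply, diagonal_apply_eq, vecMulVec_apply]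
    field_simp
    ring
  · simp only [sharedCov, of_apply, hij, if_false, Matrix.add_apply, diagonal_apply_ne _ hij,
      vecMulVec_apply, zero_add]
    field_simp

theorem totalPrecision_pos [Fintype ι] (hr0 : 0 < r0) (hr : ∀ k, 0 < r k) :
    0 < totalPrecision r0 r :=
  add_pos_of_pos_of_nonneg (inv_pos.2 hr0) (sum_nonneg fun k _ => (inv_pos.2 (hr k)).le)

variable [Fintype ι] [DecidableEq ι]

theorem sharedCov_mul_sharedCovInv (hr0 : 0 < r0) (hr : ∀ k, 0 < r k) :
    sharedCov r0 r * sharedCovInv r0 r = 1 := by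
  have hb : ∀ k, r0 + r k ≠ 0 := fun k => by linarith [hr k]
  set d : ι → ℝ := fun k => r k / (r0 + r k) ^ 2
  set u : ι → ℝ := fun k => r0 / (r0 + r k)
  set v : ι → ℝ := fun k => 1 / (r0 + r k)
  set w : ι → ℝ := fun k => (r0 + r k) / r k
  have hd0 : ∀ k, d k ≠ 0 := fun k => by have := hr k; simp only [d]; positivity
  have hd : d⁻¹ = fun k => (r0 + r k) ^ 2 / r k := by ext k; simp [d]
  have hdu : d⁻¹ * u = r0 • w := by
    ext k
    have := hb k
    simp only [Pi.mul_apply, Pi.inv_apply, inv_div, Pi.smul_apply, smul_eq_mul, d, u, w]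
    field_simp
  have hdv : d⁻¹ * v = w := by
    ext k
    have := hb k
    simp only [Pi.mul_apply, Pi.inv_apply, inv_div, d, v, w]
    field_simp
  have hvw : v ⬝ᵥ w = ∑ k, (r k)⁻¹ := by
    refine sum_congr rfl fun k _ => ?_
    have := hb k
    simp only [v, w]
    field_simp
  have hs : 1 + v ⬝ᵥ (d⁻¹ * u) = r0 * totalPrecision r0 r := by
    rw [hdu, dotProduct_smul, hvw, totalPrecision, mul_add, mul_inv_cancel₀ hr0.ne', smul_eq_mul]
  have hP := totalPrecision_pos hr0 hr
  have := diagonal_add_vecMulVec_mul_eq_one d u v hd0 (by rw [hs]; positivity)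
  rwa [← sharedCov_eq_diagonal_add_vecMulVec hb, hs, hdu, hdv, hd, smul_vecMulVec, smul_smul,
    _root_.mul_inv_rev, inv_mul_cancel_right₀ hr0.ne'] at this

theorem sum_sharedCovInv_apply_div (hr0 : 0 < r0) (hr : ∀ k, 0 < r k) (k : ι) :
    (∑ j, sharedCovInv r0 r j k) / (r0 + r k) =
      1 - ((Fintype.card ι : ℝ) - 1) / r k * (totalPrecision r0 r)⁻¹ := by
  have hcol : ∑ j, sharedCovInv r0 r j k = (r0 + r k) ^ 2 / r k -
      (totalPrecision r0 r)⁻¹ * (∑ j, (r0 + r j) / r j) * ((r0 + r k) / r k) := by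
    simp [sharedCovInv, diagonal_apply, vecMulVec_apply, sum_sub_distrib, mul_sum, sum_mul,
      mul_assoc]
  have hw : ∑ j, (r0 + r j) / r j = Fintype.card ι + r0 * ∑ j, (r j)⁻¹ := by
    rw [mul_sum, ← nsmul_one, ← card_univ, ← sum_const, ← sum_add_distrib]
    refine sum_congr rfl fun j _ => ?_
    have := (hr j).ne'
    field_simp
    ring
  have hT : r0 * ∑ j, (r j)⁻¹ = r0 * totalPrecision r0 r - 1 := by
    rw [totalPrecision, mul_add, mul_inv_cancel₀ hr0.ne']
    ring
  have := (hr k).ne'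
  have : r0 + r k ≠ 0 := by linarith [hr k]
  have := (totalPrecision_pos hr0 hr).ne'
  rw [hcol, hw, hT]
  field_simp
  ring

end SharedObservation

/-- In the private/shared observation model, the supra-Bayesian weights
are `w_k = 1 − ((K−1)/r_k)(Σ_{k'=0}^K 1/r_{k'})⁻¹`, where `Σ̃` has diagonal entries
`1/(r_0+r_k)` and off-diagonal entries `r_0/((r_0+r_k)(r_0+r_{k'}))`. -/
theorem private_shared_observation_weights
    {K : ℕ} (r0 : ℕ) (r : Fin K → ℕ) (hr0 : 0 < r0) (hr : ∀ k, 0 < r k) :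
    (let Stil : Matrix (Fin K) (Fin K) ℝ :=
      Matrix.of fun k k' =>
        if k = k' then 1 / ((r0 : ℝ) + (r k : ℝ))
        else (r0 : ℝ) / (((r0 : ℝ) + (r k : ℝ)) * ((r0 : ℝ) + (r k' : ℝ)))
     IsUnit Stil.det ∧
       ∀ k, (∑ j, Stil⁻¹ j k) / ((r0 : ℝ) + (r k : ℝ)) =
         1 - (((K : ℝ) - 1) / (r k : ℝ)) *
           (((r0 : ℝ)⁻¹ + ∑ k', ((r k' : ℝ))⁻¹)⁻¹)) := by
  have hr0' : (0 : ℝ) < r0 := by exact_mod_cast hr0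
  have hr' : ∀ k, (0 : ℝ) < r k := fun k => by exact_mod_cast hr k
  have hmul := sharedCov_mul_sharedCovInv hr0' hr'
  refine ⟨isUnit_det_of_right_inverse hmul, fun k => ?_⟩
  show (∑ j, (sharedCov (r0 : ℝ) (fun k => (r k : ℝ)))⁻¹ j k) / _ = _
  rw [inv_eq_right_inv hmul, sum_sharedCovInv_apply_div hr0' hr', Fintype.card_fin]
  rfl
end
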